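/- Let c, w, w₊ > 0, h := (2w + 2w₊)/c, and 0 < α < min{c, w, w₊}. Let W_α := {φ ∈ H¹(−h,0) : −w+α ≤ φ(s) ≤ w₊−α for all s, and ‖φ′‖_{L_∞} ≤ c−α}. Then for every φ ∈ W_α there exists a unique s_φ ∈ [0,h] such that c·s_φ = φ(−s_φ) + φ(0) + 2w, and the map W_α ∋ φ ↦ s_φ ∈ [0,h] is Lipschitz continuous with |s_φ − s_ψ| ≤ (2/α)(h^{1/2} + h^{−1/2})‖φ − ψ‖_{H¹(−h,0)} for all φ, ψ ∈ W_α. -/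

import Mathlib

/-!
Since `‖φ'‖_∞ ≤ c - α`, the map `s ↦ c s - φ (-s)` increases at rate at least `α`. The
bounds on `φ` put `φ 0 + 2w` between its values at `0` and `h`, so the intermediate value
theorem gives `s_φ`, and the rate gives uniqueness. Subtracting the equations for `s_φ` and
`s_ψ` yields `α |s_φ - s_ψ| ≤ |(φ - ψ) 0| + |(φ - ψ) (-s_ψ)|`, and both terms are controlled
by the embedding `‖f‖_∞ ≤ (√h + 1/√h) ‖f‖_{H¹(-h,0)}`: some point carries `|f| ≤ ‖f‖_{L²}/√h`,
and `f` varies by at most `‖f'‖_{L¹} ≤ √h ‖f'‖_{L²}`.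
-/

open MeasureTheory Set Filter

section Prelims

variable {E : Type*} [NormedAddCommGroup E] [NormedSpace ℝ E]

/-- `f` belongs to `H¹(a,b;E)` with weak derivative `f'`; `f` is identified with its
continuous representative, so that the fundamental theorem of calculus holds. -/
structure MemH1 (a b : ℝ) (f f' : ℝ → E) : Prop where
  contOn : ContinuousOn f (Set.Icc a b)
  memL2 : MeasureTheory.MemLp f 2 (MeasureTheory.volume.restrict (Set.Ioo a b))
  derivMemL2 : MeasureTheory.MemLp f' 2 (MeasureTheory.volume.restrict (Set.Ioo a b))
  ftc : ∀ t ∈ Set.Icc a b, f t = f a + ∫ s in a..t, f' s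

/-- The `H¹(a,b)`-norm of a function `f` with weak derivative `f'`. -/
noncomputable def H1norm (a b : ℝ) (f f' : ℝ → E) : ℝ :=
  Real.sqrt ((∫ t in Set.Ioo a b, ‖f t‖ ^ 2) + ∫ t in Set.Ioo a b, ‖f' t‖ ^ 2)

/-- Membership in `V_β = {ψ ∈ H¹(-h,0;E) : ‖ψ'‖_∞ ≤ β}`. -/
def VbetaMem (h β : ℝ) (ψ ψ' : ℝ → E) : Prop :=
  MemH1 (-h) 0 ψ ψ' ∧
    ∀ᵐ t ∂(MeasureTheory.volume.restrict (Set.Ioo (-h) (0 : ℝ))), ‖ψ' t‖ ≤ β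

/-- The pre-history of `x` at time `t`: `s ↦ x (t + s)`. -/
def prehist (x : ℝ → E) (t : ℝ) : ℝ → E := fun s => x (t + s)

end Prelims

theorem integral_norm_le_sqrt_mul_sqrt_integral_norm_sq {E : Type*} [NormedAddCommGroup E]
    {a b : ℝ} (hab : a ≤ b) {g : ℝ → E} (hg : MemLp g 2 (volume.restrict (Ioo a b))) :
    ∫ t in Ioo a b, ‖g t‖ ≤ √(b - a) * √(∫ t in Ioo a b, ‖g t‖ ^ 2) := by
  have hg₂ : MemLp (fun t => ‖g t‖) (ENNReal.ofReal 2) (volume.restrict (Ioo a b)) := by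
    rw [ENNReal.ofReal_ofNat]; exact hg.norm
  have holder := integral_mul_le_Lp_mul_Lq_of_nonneg Real.HolderConjugate.two_two
    (Eventually.of_forall fun t => norm_nonneg (g t)) (Eventually.of_forall fun _ => zero_le_one)
    hg₂ (memLp_const 1)
  simp only [mul_one, Real.rpow_two, one_pow, setIntegral_const,
    Real.volume_real_Ioo_of_le hab, smul_eq_mul] at holder
  rwa [Real.sqrt_eq_rpow, Real.sqrt_eq_rpow, mul_comm]

section H1norm

variable {E : Type*} [NormedAddCommGroup E] {a b : ℝ} {f f' : ℝ → E}

theorem sqrt_integral_norm_sq_le_H1norm : √(∫ t in Ioo a b, ‖f t‖ ^ 2) ≤ H1norm a b f f' :=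
  Real.sqrt_le_sqrt (le_add_of_nonneg_right (integral_nonneg fun _ => sq_nonneg _))

theorem sqrt_integral_norm_deriv_sq_le_H1norm :
    √(∫ t in Ioo a b, ‖f' t‖ ^ 2) ≤ H1norm a b f f' :=
  Real.sqrt_le_sqrt (le_add_of_nonneg_left (integral_nonneg fun _ => sq_nonneg _))

end H1norm

namespace MemH1

variable {E : Type*} [NormedAddCommGroup E] [NormedSpace ℝ E] {a b u v : ℝ} {f f' g g' : ℝ → E}

theorem integrableOn_deriv (hf : MemH1 a b f f') : IntegrableOn f' (Icc a b) :=
  (integrableOn_Icc_iff_integrableOn_Ioo).2 (hf.derivMemL2.integrable one_le_two)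

theorem intervalIntegrable_deriv (hf : MemH1 a b f f') (hu : u ∈ Icc a b) (hv : v ∈ Icc a b) :
    IntervalIntegrable f' volume u v :=
  (hf.integrableOn_deriv.mono_set (uIcc_subset_Icc hu hv)).intervalIntegrable

theorem sub_eq_integral (hf : MemH1 a b f f') (hu : u ∈ Icc a b) (hv : v ∈ Icc a b) :
    f v - f u = ∫ t in u..v, f' t := by
  have ha : a ∈ Icc a b := left_mem_Icc.2 (hu.1.trans hu.2)
  rw [hf.ftc v hv, hf.ftc u hu, add_sub_add_left_eq_sub,
    intervalIntegral.integral_interval_sub_left (hf.intervalIntegrable_deriv ha hv)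
      (hf.intervalIntegrable_deriv ha hu)]

protected theorem sub (hf : MemH1 a b f f') (hg : MemH1 a b g g') : MemH1 a b (f - g) (f' - g') := by
  refine ⟨hf.contOn.sub hg.contOn, hf.memL2.sub hg.memL2, hf.derivMemL2.sub hg.derivMemL2,
    fun t ht => ?_⟩
  have ha : a ∈ Icc a b := left_mem_Icc.2 (ht.1.trans ht.2)
  simp only [Pi.sub_apply]
  rw [hf.ftc t ht, hg.ftc t ht, intervalIntegral.integral_sub
    (hf.intervalIntegrable_deriv ha ht) (hg.intervalIntegrable_deriv ha ht)]
  abel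

theorem norm_sub_le_mul_of_ae_norm_deriv_le (hf : MemH1 a b f f') {β : ℝ}
    (hβ : ∀ᵐ t ∂volume.restrict (Ioo a b), ‖f' t‖ ≤ β) (hu : u ∈ Icc a b) (hv : v ∈ Icc a b) :
    ‖f v - f u‖ ≤ β * |v - u| := by
  rw [Measure.restrict_congr_set Ioo_ae_eq_Icc, ae_restrict_iff' measurableSet_Icc] at hβ
  rw [hf.sub_eq_integral hu hv]
  refine intervalIntegral.norm_integral_le_of_norm_le_const_ae (hβ.mono fun t ht hmem => ?_)
  exact ht (uIcc_subset_Icc hu hv (uIoc_subset_uIcc hmem))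

theorem norm_sub_le_integral_norm_deriv (hf : MemH1 a b f f') (hu : u ∈ Icc a b)
    (hv : v ∈ Icc a b) : ‖f v - f u‖ ≤ ∫ t in Ioo a b, ‖f' t‖ := by
  wlog huv : u ≤ v generalizing u v
  · rw [norm_sub_rev]; exact this hv hu (le_of_not_ge huv)
  calc ‖f v - f u‖ ≤ ∫ t in u..v, ‖f' t‖ := by
        rw [hf.sub_eq_integral hu hv]; exact intervalIntegral.norm_integral_le_integral_norm huv
    _ = ∫ t in Ioc u v, ‖f' t‖ := intervalIntegral.integral_of_le huv
    _ ≤ ∫ t in Icc a b, ‖f' t‖ :=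
        setIntegral_mono_set hf.integrableOn_deriv.norm (Eventually.of_forall fun _ => norm_nonneg _)
          (Ioc_subset_Icc_self.trans (Icc_subset_Icc hu.1 hv.2)).eventuallyLE
    _ = ∫ t in Ioo a b, ‖f' t‖ := integral_Icc_eq_integral_Ioo

theorem exists_sqrt_mul_norm_le (hf : MemH1 a b f f') (hab : a ≤ b) :
    ∃ t₀ ∈ Icc a b, √(b - a) * ‖f t₀‖ ≤ √(∫ t in Ioo a b, ‖f t‖ ^ 2) := by
  obtain ⟨t₀, ht₀, hmin⟩ := isCompact_Icc.exists_isMinOn (nonempty_Icc.2 hab) hf.contOn.norm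
  refine ⟨t₀, ht₀, ?_⟩
  have hsq : ∫ _t in Ioo a b, ‖f t₀‖ ^ 2 ≤ ∫ t in Ioo a b, ‖f t‖ ^ 2 :=
    setIntegral_mono_on (integrableOn_const measure_Ioo_lt_top.ne) hf.memL2.norm.integrable_sq
      measurableSet_Ioo fun t ht =>
        pow_le_pow_left₀ (norm_nonneg _) (hmin (Ioo_subset_Icc_self ht)) 2
  rw [setIntegral_const, Real.volume_real_Ioo_of_le hab, smul_eq_mul] at hsq
  rw [← Real.sqrt_sq (norm_nonneg (f t₀)), ← Real.sqrt_mul (sub_nonneg.2 hab)]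
  exact Real.sqrt_le_sqrt hsq

theorem norm_le_H1norm (hf : MemH1 a b f f') (hab : a < b) {t : ℝ} (ht : t ∈ Icc a b) :
    ‖f t‖ ≤ (√(b - a) + 1 / √(b - a)) * H1norm a b f f' := by
  obtain ⟨t₀, ht₀, hmin⟩ := hf.exists_sqrt_mul_norm_le hab.le
  have hlen : 0 < √(b - a) := Real.sqrt_pos.2 (sub_pos.2 hab)
  have hbase : ‖f t₀‖ ≤ 1 / √(b - a) * H1norm a b f f' := by
    rw [one_div_mul_eq_div, le_div_iff₀ hlen, mul_comm]
    exact hmin.trans sqrt_integral_norm_sq_le_H1norm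
  have hvar : ‖f t - f t₀‖ ≤ √(b - a) * H1norm a b f f' :=
    calc ‖f t - f t₀‖ ≤ ∫ s in Ioo a b, ‖f' s‖ := hf.norm_sub_le_integral_norm_deriv ht₀ ht
      _ ≤ √(b - a) * √(∫ s in Ioo a b, ‖f' s‖ ^ 2) :=
          integral_norm_le_sqrt_mul_sqrt_integral_norm_sq hab.le hf.derivMemL2
      _ ≤ √(b - a) * H1norm a b f f' :=
          mul_le_mul_of_nonneg_left sqrt_integral_norm_deriv_sq_le_H1norm hlen.le
  calc ‖f t‖ ≤ ‖f t₀‖ + ‖f t - f t₀‖ := norm_le_insert' _ _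
    _ ≤ _ := by linarith

end MemH1

theorem MemH1.mul_abs_sub_le_abs_sub {h c α : ℝ} {φ φ' : ℝ → ℝ} (hφ : MemH1 (-h) 0 φ φ')
    (hc : 0 ≤ c) (hφ' : ∀ᵐ t ∂volume.restrict (Ioo (-h) (0 : ℝ)), |φ' t| ≤ c - α) {x y : ℝ}
    (hx : x ∈ Icc 0 h) (hy : y ∈ Icc 0 h) :
    α * |x - y| ≤ |(c * x - φ (-x)) - (c * y - φ (-y))| := by
  have hneg : ∀ z ∈ Icc 0 h, -z ∈ Icc (-h) (0 : ℝ) := fun z hz =>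
    ⟨neg_le_neg hz.2, neg_nonpos.2 hz.1⟩
  have hlip : |φ (-x) - φ (-y)| ≤ (c - α) * |x - y| := by
    have := hφ.norm_sub_le_mul_of_ae_norm_deriv_le hφ' (hneg y hy) (hneg x hx)
    rwa [Real.norm_eq_abs, neg_sub_neg, abs_sub_comm y x] at this
  have htri := abs_sub_abs_le_abs_sub (c * (x - y)) (φ (-x) - φ (-y))
  rw [abs_mul, abs_of_nonneg hc] at htri
  calc α * |x - y| = c * |x - y| - (c - α) * |x - y| := by ring
    _ ≤ |c * (x - y) - (φ (-x) - φ (-y))| := by linarith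
    _ = |(c * x - φ (-x)) - (c * y - φ (-y))| := by ring_nf

theorem exists_mem_Icc_mul_eq_comp_neg_add {c h y : ℝ} {φ : ℝ → ℝ} (hh : 0 ≤ h)
    (hφ : ContinuousOn φ (Icc (-h) 0)) (hlo : -φ 0 ≤ y) (hhi : y ≤ c * h - φ (-h)) :
    ∃ s ∈ Icc 0 h, c * s = φ (-s) + y := by
  have hcont : ContinuousOn (fun s => c * s - φ (-s)) (Icc 0 h) :=
    (continuous_const.mul continuous_id).continuousOn.sub
      (hφ.comp continuous_neg.continuousOn fun z hz => ⟨neg_le_neg hz.2, neg_nonpos.2 hz.1⟩)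
  obtain ⟨s, hs, hys⟩ := intermediate_value_Icc hh hcont ⟨by simpa using hlo, hhi⟩
  exact ⟨s, hs, by linarith [hys]⟩

theorem stmt19_general (c w wp : ℝ) (hc : 0 < c) (hw : 0 < w) (hwp : 0 < wp)
    (h : ℝ) (hdef : h = (2 * w + 2 * wp) / c)
    (α : ℝ) (hα0 : 0 < α) :
    (∀ φ φd : ℝ → ℝ, MemH1 (-h) 0 φ φd →
      (∀ s ∈ Set.Icc (-h) (0 : ℝ), -w + α ≤ φ s ∧ φ s ≤ wp - α) →
      (∀ᵐ t ∂(volume.restrict (Set.Ioo (-h) (0 : ℝ))), |φd t| ≤ c - α) →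
      ∃ s, (s ∈ Set.Icc (0 : ℝ) h ∧ c * s = φ (-s) + φ 0 + 2 * w) ∧
        ∀ s', s' ∈ Set.Icc (0 : ℝ) h ∧ c * s' = φ (-s') + φ 0 + 2 * w → s' = s) ∧
    (∀ φ φd ψ ψd : ℝ → ℝ, MemH1 (-h) 0 φ φd → MemH1 (-h) 0 ψ ψd →
      (∀ s ∈ Set.Icc (-h) (0 : ℝ), -w + α ≤ φ s ∧ φ s ≤ wp - α) →
      (∀ᵐ t ∂(volume.restrict (Set.Ioo (-h) (0 : ℝ))), |φd t| ≤ c - α) →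
      (∀ s ∈ Set.Icc (-h) (0 : ℝ), -w + α ≤ ψ s ∧ ψ s ≤ wp - α) →
      (∀ᵐ t ∂(volume.restrict (Set.Ioo (-h) (0 : ℝ))), |ψd t| ≤ c - α) →
      ∀ sφ ∈ Set.Icc (0 : ℝ) h, ∀ sψ ∈ Set.Icc (0 : ℝ) h,
        c * sφ = φ (-sφ) + φ 0 + 2 * w → c * sψ = ψ (-sψ) + ψ 0 + 2 * w →
        |sφ - sψ| ≤ (2 / α) * (Real.sqrt h + 1 / Real.sqrt h) *
          H1norm (-h) 0 (φ - ψ) (φd - ψd)) := by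
  have hh : 0 < h := by rw [hdef]; positivity
  have hch : c * h = 2 * w + 2 * wp := by rw [hdef]; field_simp
  have hleft : -h ∈ Icc (-h) (0 : ℝ) := left_mem_Icc.2 (by linarith)
  have hright : (0 : ℝ) ∈ Icc (-h) 0 := right_mem_Icc.2 (by linarith)
  refine ⟨fun φ φd hφ hbd hφd => ?_,
    fun φ φd ψ ψd hφ hψ _ hφd _ _ sφ hsφ sψ hsψ hφeq hψeq => ?_⟩
  · obtain ⟨s, hs, hseq⟩ := exists_mem_Icc_mul_eq_comp_neg_add (c := c) (y := φ 0 + 2 * w)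
      hh.le hφ.contOn (by linarith [(hbd 0 hright).1])
      (by linarith [(hbd 0 hright).2, (hbd (-h) hleft).2])
    refine ⟨s, ⟨hs, by linarith⟩, fun s' ⟨hs', hs'eq⟩ => ?_⟩
    have hrate := hφ.mul_abs_sub_le_abs_sub hc.le hφd hs' hs
    rw [show (c * s' - φ (-s')) - (c * s - φ (-s)) = 0 by linarith, abs_zero] at hrate
    exact sub_eq_zero.1 (abs_nonpos_iff.1 (nonpos_of_mul_nonpos_right hrate hα0))
  · have hsup : ∀ t ∈ Icc (-h) (0 : ℝ),
        |φ t - ψ t| ≤ (√h + 1 / √h) * H1norm (-h) 0 (φ - ψ) (φd - ψd) := fun t ht => by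
      simpa using (hφ.sub hψ).norm_le_H1norm (by linarith) ht
    have hrate := hφ.mul_abs_sub_le_abs_sub hc.le hφd hsφ hsψ
    rw [show (c * sφ - φ (-sφ)) - (c * sψ - φ (-sψ)) = (φ 0 - ψ 0) + (φ (-sψ) - ψ (-sψ)) by
      linarith] at hrate
    calc |sφ - sψ| = α * |sφ - sψ| / α := by field_simp
      _ ≤ (|φ 0 - ψ 0| + |φ (-sψ) - ψ (-sψ)|) / α := by
          gcongr; exact hrate.trans (abs_add_le _ _)
      _ ≤ ((√h + 1 / √h) * H1norm (-h) 0 (φ - ψ) (φd - ψd) +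
            (√h + 1 / √h) * H1norm (-h) 0 (φ - ψ) (φd - ψd)) / α := by
          gcongr
          exacts [hsup 0 hright, hsup _ ⟨neg_le_neg hsψ.2, neg_nonpos.2 hsψ.1⟩]
      _ = _ := by ring

/-- **The echo-location delay functional is well defined and Lipschitz on `W_α`**
(Theorem 6.3). For `c, w, w₊ > 0`, `h = (2w + 2w₊)/c` and `0 < α < min {c, w, w₊}`,
every `φ ∈ W_α` admits a unique `s_φ ∈ [0,h]` with `c s_φ = φ(-s_φ) + φ(0) + 2w`, and
`φ ↦ s_φ` is Lipschitz: `|s_φ - s_ψ| ≤ (2/α)(h^{1/2} + h^{-1/2}) ‖φ - ψ‖_{H¹(-h,0)}`. -/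
theorem stmt19 (c w wp : ℝ) (hc : 0 < c) (hw : 0 < w) (hwp : 0 < wp)
    (h : ℝ) (hdef : h = (2 * w + 2 * wp) / c)
    (α : ℝ) (hα0 : 0 < α) (hαc : α < c) (hαw : α < w) (hαwp : α < wp) :
    (∀ φ φd : ℝ → ℝ, MemH1 (-h) 0 φ φd →
      (∀ s ∈ Set.Icc (-h) (0 : ℝ), -w + α ≤ φ s ∧ φ s ≤ wp - α) →
      (∀ᵐ t ∂(volume.restrict (Set.Ioo (-h) (0 : ℝ))), |φd t| ≤ c - α) →
      ∃ s, (s ∈ Set.Icc (0 : ℝ) h ∧ c * s = φ (-s) + φ 0 + 2 * w) ∧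
        ∀ s', s' ∈ Set.Icc (0 : ℝ) h ∧ c * s' = φ (-s') + φ 0 + 2 * w → s' = s) ∧
    (∀ φ φd ψ ψd : ℝ → ℝ, MemH1 (-h) 0 φ φd → MemH1 (-h) 0 ψ ψd →
      (∀ s ∈ Set.Icc (-h) (0 : ℝ), -w + α ≤ φ s ∧ φ s ≤ wp - α) →
      (∀ᵐ t ∂(volume.restrict (Set.Ioo (-h) (0 : ℝ))), |φd t| ≤ c - α) →
      (∀ s ∈ Set.Icc (-h) (0 : ℝ), -w + α ≤ ψ s ∧ ψ s ≤ wp - α) →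
      (∀ᵐ t ∂(volume.restrict (Set.Ioo (-h) (0 : ℝ))), |ψd t| ≤ c - α) →
      ∀ sφ ∈ Set.Icc (0 : ℝ) h, ∀ sψ ∈ Set.Icc (0 : ℝ) h,
        c * sφ = φ (-sφ) + φ 0 + 2 * w → c * sψ = ψ (-sψ) + ψ 0 + 2 * w →
        |sφ - sψ| ≤ (2 / α) * (Real.sqrt h + 1 / Real.sqrt h) *
          H1norm (-h) 0 (φ - ψ) (φd - ψd)) :=
  stmt19_general c w wp hc hw hwp h hdef α hα0
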